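/- arXiv:2211.04758 — 2 statements merged into one kernel-verified Lean document; each statement's English description precedes it below -/
import Mathlib

section
/- Given n, p, β with 0 < β ≤ pn/400, every n-vertex (p,β)-bijumbled graph with minimum degree at least 4√(pβn) is an (n, d_1)-expander for d_1 = pn/(4β). -/
/-- The external neighbourhood `N_G(X) = (⋃_{v ∈ X} N_G(v)) \ X`. -/
def extN {V : Type*} (G : SimpleGraph V) (X : Set V) : Set V :=
  (⋃ v ∈ X, G.neighborSet v) \ X

/-- The number of adjacent (ordered) pairs in `X × Y`; this counts each edge with both
endpoints in `X ∩ Y` twice. -/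
noncomputable def eCount {V : Type*} (G : SimpleGraph V) (X Y : Set V) : ℕ :=
  {p : V × V | p.1 ∈ X ∧ p.2 ∈ Y ∧ G.Adj p.1 p.2}.ncard

/-- `G` is `(p,β)`-bijumbled: for all vertex sets `X, Y` we have
`|e_G(X,Y) − p|X||Y|| ≤ β √(|X||Y|)`. -/
def Bijumbled {V : Type*} (G : SimpleGraph V) (p β : ℝ) : Prop :=
  ∀ X Y : Set V,
    |(eCount G X Y : ℝ) - p * X.ncard * Y.ncard| ≤ β * Real.sqrt (X.ncard * Y.ncard)

/-- `G` is an `(n,d)`-expander: (i) `|N_G(X)| ≥ d|X|` for all `X` with `1 ≤ |X| < n/(2d)`,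
and (ii) `e_G(X,Y) > 0` for all disjoint `X, Y` with `|X| = |Y| ≥ n/(2d)`. -/
def IsExpander (n : ℕ) (d : ℝ) (G : SimpleGraph (Fin n)) : Prop :=
  (∀ X : Set (Fin n), 1 ≤ X.ncard → (X.ncard : ℝ) < n / (2 * d) →
      d * X.ncard ≤ ((extN G X).ncard : ℝ)) ∧
  (∀ X Y : Set (Fin n), Disjoint X Y → X.ncard = Y.ncard →
      (n / (2 * d) : ℝ) ≤ X.ncard → 0 < eCount G X Y)

/-! With `d = pn/(4β)` the threshold `n/(2d)` is `2β/p`. Part (ii): for `|X| = |Y| ≥ 2β/p`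
bijumbledness gives `e(X,Y) ≥ p|X|² − β|X| > 0`.

Part (i): let `S = X ∪ N(X)`. If `p²n|X| ≥ 4β²`, there are no edges between `X` and the
complement `Z` of `S`, so bijumbledness forces `|Z| ≤ β²/(p²|X|) ≤ n/4`; as `|X| < 2β/p ≤ n/4`,
`N(X)` has at least `n/2 ≥ d|X|` vertices. If `p²n|X| < 4β²`, the minimum degree gives
`e(X,S) ≥ 4√(pβn)|X|`, whereas `|N(X)| < d|X|` would make `|S| < 2d|X|`, and then
bijumbledness bounds `e(X,S)` by `2β|X| + √(pβn)|X| ≤ 3√(pβn)|X|`. -/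

section Neighbourhood

variable {V : Type*} (G : SimpleGraph V)

lemma mem_self_union_extN_of_adj {X : Set V} {u v : V} (hu : u ∈ X) (huv : G.Adj u v) :
    v ∈ X ∪ extN G X := by
  by_cases hv : v ∈ X
  · exact Or.inl hv
  · exact Or.inr ⟨Set.mem_biUnion hu huv, hv⟩

lemma disjoint_extN (X : Set V) : Disjoint X (extN G X) := Set.disjoint_sdiff_right

lemma ncard_add_ncard_extN_add_ncard_compl [Finite V] (X : Set V) :
    X.ncard + (extN G X).ncard + (X ∪ extN G X)ᶜ.ncard = Nat.card V := by
  rw [← Set.ncard_union_eq (disjoint_extN G X), Set.ncard_add_ncard_compl]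

lemma eCount_self_union_extN (X : Set V) :
    eCount G X (X ∪ extN G X) = eCount G X Set.univ := by
  unfold eCount
  congr 1
  ext q
  simpa using fun hq hadj => mem_self_union_extN_of_adj G hq hadj

lemma eCount_compl_self_union_extN (X : Set V) : eCount G X (X ∪ extN G X)ᶜ = 0 := by
  suffices h : {q : V × V | q.1 ∈ X ∧ q.2 ∈ (X ∪ extN G X)ᶜ ∧ G.Adj q.1 q.2} = ∅ by
    rw [eCount, h, Set.ncard_empty]
  ext q
  simp only [Set.mem_ofPred_eq, Set.mem_compl_iff, Set.mem_empty_iff_false, iff_false]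
  exact fun ⟨hq, hout, hadj⟩ => hout (mem_self_union_extN_of_adj G hq hadj)

lemma eCount_coe_finset_univ [Fintype V] [DecidableRel G.Adj] (s : Finset V) :
    eCount G s Set.univ = ∑ u ∈ s, G.degree u := by
  classical
  have h : {q : V × V | q.1 ∈ (s : Set V) ∧ q.2 ∈ Set.univ ∧ G.Adj q.1 q.2}
      = ↑(G.interedges s Finset.univ) := by
    ext q
    simp [SimpleGraph.mem_interedges_iff]
  rw [eCount, h, Set.ncard_coe_finset, SimpleGraph.interedges_def, Finset.card_filter,
    Finset.sum_product]
  refine Finset.sum_congr rfl fun u _ => ?_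
  rw [← Finset.card_filter, ← SimpleGraph.card_neighborFinset_eq_degree]
  congr 1
  ext v
  simp

lemma mul_ncard_le_eCount_univ [Finite V] {δ : ℝ}
    (hδ : ∀ v, δ ≤ (G.neighborSet v).ncard) (X : Set V) :
    δ * X.ncard ≤ eCount G X Set.univ := by
  classical
  have := Fintype.ofFinite V
  lift X to Finset V using X.toFinite
  rw [eCount_coe_finset_univ, Set.ncard_coe_finset, Nat.cast_sum, mul_comm, ← nsmul_eq_mul]
  refine Finset.card_nsmul_le_sum _ _ _ fun u _ => ?_
  rw [← SimpleGraph.card_neighborFinset_eq_degree, SimpleGraph.neighborFinset_def,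
    ← Set.ncard_eq_toFinset_card']
  exact hδ u

end Neighbourhood

namespace Bijumbled

variable {V : Type*} {G : SimpleGraph V} {p β : ℝ}

lemma eCount_le (hG : Bijumbled G p β) (X Y : Set V) :
    (eCount G X Y : ℝ) ≤ p * X.ncard * Y.ncard + β * √(X.ncard * Y.ncard) := by
  linarith [(abs_le.mp (hG X Y)).2]

lemma le_eCount (hG : Bijumbled G p β) (X Y : Set V) :
    p * (√(X.ncard * Y.ncard)) ^ 2 - β * √(X.ncard * Y.ncard) ≤ eCount G X Y := by
  rw [Real.sq_sqrt (by positivity), ← mul_assoc]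
  linarith [(abs_le.mp (hG X Y)).1]

lemma sq_mul_ncard_mul_ncard_le_of_eCount_eq_zero (hG : Bijumbled G p β) (hp : 0 ≤ p)
    {X Y : Set V} (h : eCount G X Y = 0) : p ^ 2 * (X.ncard * Y.ncard) ≤ β ^ 2 := by
  have hle := hG.le_eCount X Y
  rw [h, Nat.cast_zero] at hle
  rw [← Real.sq_sqrt (by positivity : (0 : ℝ) ≤ X.ncard * Y.ncard)]
  have hw0 := Real.sqrt_nonneg ((X.ncard : ℝ) * Y.ncard)
  generalize √((X.ncard : ℝ) * Y.ncard) = w at hle hw0 ⊢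
  rcases hw0.eq_or_lt with hw | hw
  · rw [← hw]
    simpa using sq_nonneg β
  · have hpw : p * w ≤ β := le_of_mul_le_mul_right (by linarith) hw
    calc p ^ 2 * w ^ 2 = (p * w) ^ 2 := by ring
      _ ≤ β ^ 2 := pow_le_pow_left₀ (by positivity) hpw 2

lemma eCount_pos (hG : Bijumbled G p β) (hβ : 0 ≤ β) {X Y : Set V}
    (h : β < p * √(X.ncard * Y.ncard)) : 0 < eCount G X Y := by
  have hw : 0 < √((X.ncard : ℝ) * Y.ncard) := by
    refine (Real.sqrt_nonneg _).lt_of_ne fun hw => ?_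
    rw [← hw, mul_zero] at h
    linarith
  have hle := hG.le_eCount X Y
  have hpos : (0 : ℝ) < eCount G X Y := by nlinarith
  exact_mod_cast hpos

end Bijumbled

section Expansion

variable {V : Type*} [Finite V] {G : SimpleGraph V} {p β : ℝ}

lemma Bijumbled.mul_ncard_le_ncard_extN_of_sq_le (hG : Bijumbled G p β) (hp : 0 < p)
    (hpN : 8 * β ≤ p * Nat.card V) {X : Set V} (hX : 1 ≤ X.ncard)
    (hXlt : p * X.ncard < 2 * β) (hXlarge : 4 * β ^ 2 ≤ p ^ 2 * Nat.card V * X.ncard) :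
    p * Nat.card V / (4 * β) * X.ncard ≤ (extN G X).ncard := by
  have hpart : (X.ncard + (extN G X).ncard + (X ∪ extN G X)ᶜ.ncard : ℝ) = Nat.card V := by
    exact_mod_cast ncard_add_ncard_extN_add_ncard_compl G X
  have hz := hG.sq_mul_ncard_mul_ncard_le_of_eCount_eq_zero hp.le
    (eCount_compl_self_union_extN G X)
  set N : ℝ := (Nat.card V : ℝ)
  set x : ℝ := (X.ncard : ℝ)
  set z : ℝ := ((X ∪ extN G X)ᶜ.ncard : ℝ)
  have hx : 0 < x := by simp only [x]; exact_mod_cast hX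
  have hβ : 0 < β := by nlinarith
  have hz4 : 4 * z ≤ N := le_of_mul_le_mul_left (by nlinarith) (by positivity : 0 < p ^ 2 * x)
  have hx4 : 4 * x ≤ N := le_of_mul_le_mul_left (by nlinarith) hp
  have hdx : p * N / (4 * β) * x ≤ N / 2 := by
    rw [div_mul_eq_mul_div, div_le_iff₀ (by positivity)]
    nlinarith
  linarith

lemma Bijumbled.mul_ncard_le_ncard_extN_of_lt_sq (hG : Bijumbled G p β) (hp : 0 < p)
    (hβ : 0 < β) (hpN : 4 * β ≤ p * Nat.card V)
    (hmin : ∀ v, 4 * √(p * β * Nat.card V) ≤ (G.neighborSet v).ncard) {X : Set V}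
    (hX : 1 ≤ X.ncard) (hXsmall : p ^ 2 * Nat.card V * X.ncard < 4 * β ^ 2) :
    p * Nat.card V / (4 * β) * X.ncard ≤ (extN G X).ncard := by
  by_contra! hcon
  have hlower := mul_ncard_le_eCount_univ G hmin X
  rw [← eCount_self_union_extN] at hlower
  have hupper := hG.eCount_le X (X ∪ extN G X)
  have hs : ((X ∪ extN G X).ncard : ℝ) = X.ncard + (extN G X).ncard := by
    exact_mod_cast Set.ncard_union_eq (disjoint_extN G X)
  set N : ℝ := (Nat.card V : ℝ)
  set R := √(p * β * N)
  set x : ℝ := (X.ncard : ℝ)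
  set s : ℝ := ((X ∪ extN G X).ncard : ℝ)
  have hx : 0 < x := by simp only [x]; exact_mod_cast hX
  have hR : β ≤ R := Real.le_sqrt_of_sq_le (by nlinarith)
  have hs2 : 2 * β * s ≤ p * N * x := by
    rw [div_mul_eq_mul_div, lt_div_iff₀ (by positivity)] at hcon
    nlinarith [mul_le_mul_of_nonneg_right hpN hx.le]
  have hdensity : p * x * s ≤ 2 * β * x := by
    have h : 2 * β * (p * x * s) ≤ 2 * β * (2 * β * x) := by
      nlinarith [mul_le_mul_of_nonneg_left hs2 (by positivity : 0 ≤ p * x),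
        mul_lt_mul_of_pos_right hXsmall hx]
    exact le_of_mul_le_mul_left h (by positivity)
  have hdeviation : β * √(x * s) ≤ R * x := by
    rw [← pow_le_pow_iff_left₀ (by positivity) (by positivity) two_ne_zero, mul_pow, mul_pow,
      Real.sq_sqrt (by positivity), Real.sq_sqrt (by positivity)]
    nlinarith [mul_le_mul_of_nonneg_left hs2 (by positivity : 0 ≤ β * x),
      (by positivity : 0 ≤ β ^ 2 * (x * s))]
  nlinarith [mul_le_mul_of_nonneg_right hR hx.le, mul_pos hβ hx]

end Expansion

/-- Given `0 < β ≤ pn/400`, every `n`-vertex `(p,β)`-bijumbled graph with minimum degree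
at least `4√(pβn)` is an `(n, pn/(4β))`-expander. -/
theorem stmt4 (n : ℕ) (p β : ℝ) (hβ : 0 < β) (hβ' : β ≤ p * n / 400)
    (G : SimpleGraph (Fin n)) (hjumbled : Bijumbled G p β)
    (hmin : ∀ v, 4 * Real.sqrt (p * β * n) ≤ ((G.neighborSet v).ncard : ℝ)) :
    IsExpander n (p * n / (4 * β)) G := by
  have hpn : 0 < p * n := by linarith
  have hp : 0 < p := pos_of_mul_pos_left hpn n.cast_nonneg
  have hn : (n : ℝ) ≠ 0 := (pos_of_mul_pos_right hpn hp.le).ne'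
  have hthreshold : (n : ℝ) / (2 * (p * n / (4 * β))) = 2 * β / p := by
    field_simp
    ring
  refine ⟨fun X hX hXsize => ?_, fun X Y _ hXY hXsize => ?_⟩
  · rw [hthreshold, lt_div_iff₀ hp] at hXsize
    rcases le_or_gt (4 * β ^ 2) (p ^ 2 * n * X.ncard) with hlarge | hsmall
    · simpa only [Nat.card_fin] using hjumbled.mul_ncard_le_ncard_extN_of_sq_le hp
        (by rw [Nat.card_fin]; linarith) hX (by linarith)
        (by simpa only [Nat.card_fin] using hlarge)
    · simpa only [Nat.card_fin] using hjumbled.mul_ncard_le_ncard_extN_of_lt_sq hp hβ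
        (by rw [Nat.card_fin]; linarith) (by simpa only [Nat.card_fin] using hmin) hX
        (by simpa only [Nat.card_fin] using hsmall)
  · rw [hthreshold, div_le_iff₀ hp] at hXsize
    apply hjumbled.eCount_pos hβ.le
    rw [← hXY, Real.sqrt_mul_self (Nat.cast_nonneg _)]
    linarith
end

section
/- Let d, m ∈ ℕ and let G be a graph with disjoint vertex sets A, B ⊆ V(G) satisfying: (1) |N_G(X) ∩ B| ≥ d|X| for all X ⊆ A with 1 ≤ |X| ≤ m, and |N_G(Y) ∩ A| ≥ d|Y| for all Y ⊆ B with 1 ≤ |Y| ≤ m; (2) e_G(X,Y) > 0 for all X ⊆ A, Y ⊆ B with |X| = |Y| = m. Then for every function f : A → {1, ..., d} with Σ_{u∈A} f(u) = |B|, there exists an f-matching from A into B. -/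
/-- `S` describes an `f`-matching from `A` into `B` in `G`: a collection of pairwise
vertex-disjoint stars `{S_u : u ∈ A}` where `S_u` has center `u` and exactly `f u` leaves
inside `B`. -/
def IsFMatching {V : Type*} (G : SimpleGraph V) (A B : Set V) (f : V → ℕ)
    (S : V → Set V) : Prop :=
  (∀ u ∈ A, S u ⊆ B ∧ (S u).ncard = f u ∧ ∀ x ∈ S u, G.Adj u x) ∧
  ∀ u ∈ A, ∀ u' ∈ A, u ≠ u' → Disjoint (insert u (S u)) (insert u' (S u'))

lemma mem_extN {V : Type*} {G : SimpleGraph V} {X : Set V} {v : V} :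
    v ∈ extN G X ↔ (∃ u ∈ X, G.Adj u v) ∧ v ∉ X := by
  simp [extN, SimpleGraph.mem_neighborSet]

/-- Star-matching lemma.  If (1) every `X ⊆ A` with `1 ≤ |X| ≤ m` satisfies
`|N_G(X) ∩ B| ≥ d|X|` and every `Y ⊆ B` with `1 ≤ |Y| ≤ m` satisfies
`|N_G(Y) ∩ A| ≥ d|Y|`, and (2) `e_G(X,Y) > 0` whenever `X ⊆ A`, `Y ⊆ B` with
`|X| = |Y| = m`, then for every `f : A → {1,…,d}` with `∑_{u ∈ A} f u = |B|` there is an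
`f`-matching from `A` into `B`. -/
theorem stmt7 {V : Type*} [Fintype V] (d m : ℕ) (G : SimpleGraph V) (A B : Set V)
    (hAB : Disjoint A B)
    (h1A : ∀ X : Set V, X ⊆ A → 1 ≤ X.ncard → X.ncard ≤ m →
      d * X.ncard ≤ (extN G X ∩ B).ncard)
    (h1B : ∀ Y : Set V, Y ⊆ B → 1 ≤ Y.ncard → Y.ncard ≤ m →
      d * Y.ncard ≤ (extN G Y ∩ A).ncard)
    (h2 : ∀ X Y : Set V, X ⊆ A → Y ⊆ B → X.ncard = m → Y.ncard = m →
      0 < eCount G X Y)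
    (f : V → ℕ) (hf : ∀ u ∈ A, 1 ≤ f u ∧ f u ≤ d)
    (hsum : ∑ᶠ u ∈ A, f u = B.ncard) :
    ∃ S : V → Set V, IsFMatching G A B f S := by
  classical
  -- m = 0 is contradictory
  rcases Nat.eq_zero_or_pos m with hm0 | hm
  · exfalso
    have h := h2 ∅ ∅ (Set.empty_subset _) (Set.empty_subset _) (by simp [hm0])
      (by simp [hm0])
    have he : ({p : V × V | p.1 ∈ (∅ : Set V) ∧ p.2 ∈ (∅ : Set V) ∧ G.Adj p.1 p.2}) = ∅ := by
      ext p; simp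
    rw [eCount, he] at h
    simp at h
  -- A = ∅ case
  rcases Set.eq_empty_or_nonempty A with hA0 | ⟨a0, ha0⟩
  · subst hA0
    have hB0 : B.ncard = 0 := by rw [← hsum]; simp
    refine ⟨fun _ => ∅, ?_, ?_⟩ <;> simp
  have hd : 1 ≤ d := le_trans (hf a0 ha0).1 (hf a0 ha0).2
  set AF : Finset V := A.toFinset with hAFdef
  have hsum' : ∑ u ∈ AF, f u = B.ncard := by
    rw [← hsum, ← Set.coe_toFinset A, finsum_mem_coe_finset]
  -- key counting lemma
  have key : ∀ Xf : Finset V, ↑Xf ⊆ A → ∑ u ∈ Xf, f u ≤ (extN G ↑Xf ∩ B).ncard := by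
    intro Xf hXA
    rcases Finset.eq_empty_or_nonempty Xf with rfl | hXne
    · simp
    have hX1 : 1 ≤ (↑Xf : Set V).ncard := by
      rw [Set.ncard_coe_finset]; exact hXne.card_pos
    rcases le_or_gt Xf.card m with hle | hgt
    · -- small case: use h1A
      have hsumle : ∑ u ∈ Xf, f u ≤ Xf.card • d :=
        Finset.sum_le_card_nsmul Xf f d (fun u hu => (hf u (hXA hu)).2)
      calc ∑ u ∈ Xf, f u ≤ Xf.card • d := hsumle
        _ = d * (↑Xf : Set V).ncard := by rw [Set.ncard_coe_finset, smul_eq_mul, mul_comm]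
        _ ≤ _ := h1A _ hXA hX1 (by rwa [Set.ncard_coe_finset])
    · -- large case
      set Yset : Set V := B \ extN G ↑Xf with hYdef
      have hYB : Yset ⊆ B := Set.diff_subset
      have hYfin : Yset.Finite := Set.toFinite _
      have hYlt : Yset.ncard < m := by
        by_contra hcon
        push_neg at hcon
        obtain ⟨Y', hY'sub, hY'card⟩ := Set.exists_subset_card_eq hcon
        have hXm : m ≤ (↑Xf : Set V).ncard := by
          rw [Set.ncard_coe_finset]; exact hgt.le
        obtain ⟨X', hX'sub, hX'card⟩ := Set.exists_subset_card_eq hXm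
        have hpos := h2 X' Y' (hX'sub.trans hXA) (hY'sub.trans hYB) hX'card hY'card
        rw [eCount] at hpos
        obtain ⟨⟨x, y⟩, hx, hy, hadj⟩ := Set.nonempty_of_ncard_ne_zero hpos.ne'
        have hyY : y ∈ Yset := hY'sub hy
        have hyB : y ∈ B := hYB hyY
        have hynX : y ∉ (↑Xf : Set V) := fun hyX => Set.disjoint_left.mp hAB (hXA hyX) hyB
        exact hyY.2 (mem_extN.mpr ⟨⟨x, hX'sub hx, hadj⟩, hynX⟩)
      have hXAF : Xf ⊆ AF := by
        intro u hu; rw [hAFdef, Set.mem_toFinset]; exact hXA hu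
      have hYle : Yset.ncard ≤ (AF \ Xf).card := by
        rcases Set.eq_empty_or_nonempty Yset with hY0 | hYne
        · simp [hY0]
        have hY1 : 1 ≤ Yset.ncard := (Set.ncard_pos hYfin).mpr hYne
        have hNY := h1B Yset hYB hY1 hYlt.le
        have hsubA : extN G Yset ∩ A ⊆ ↑(AF \ Xf) := by
          rintro a ⟨haN, haA⟩
          obtain ⟨⟨y, hyY, hadj⟩, hanY⟩ := mem_extN.mp haN
          have haX : a ∉ Xf := by
            intro haX
            have hyB : y ∈ B := hYB hyY
            have hynX : y ∉ (↑Xf : Set V) := fun hyX =>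
              Set.disjoint_left.mp hAB (hXA hyX) hyB
            exact hyY.2 (mem_extN.mpr ⟨⟨a, haX, hadj.symm⟩, hynX⟩)
          simp only [Finset.coe_sdiff, Set.mem_diff, Finset.mem_coe]
          exact ⟨by rw [hAFdef, Set.mem_toFinset]; exact haA, haX⟩
        have hcard : (extN G Yset ∩ A).ncard ≤ (AF \ Xf).card := by
          rw [← Set.ncard_coe_finset (AF \ Xf)]
          exact Set.ncard_le_ncard hsubA (Set.toFinite _)
        calc Yset.ncard ≤ d * Yset.ncard := Nat.le_mul_of_pos_left _ hd
          _ ≤ (extN G Yset ∩ A).ncard := hNY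
          _ ≤ _ := hcard
      have hdiff : extN G ↑Xf ∩ B = B \ Yset := by
        ext v
        simp only [hYdef, Set.mem_inter_iff, Set.mem_diff]
        tauto
      have hsum2 : ∑ u ∈ Xf, f u + Yset.ncard ≤ B.ncard := by
        have h1 : ∑ u ∈ AF \ Xf, f u + ∑ u ∈ Xf, f u = ∑ u ∈ AF, f u :=
          Finset.sum_sdiff hXAF
        have h2' : (AF \ Xf).card ≤ ∑ u ∈ AF \ Xf, f u := by
          have := Finset.card_nsmul_le_sum (AF \ Xf) f 1
            (fun u hu => (hf u (by
              have := (Finset.mem_sdiff.mp hu).1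
              rw [hAFdef, Set.mem_toFinset] at this; exact this)).1)
          simpa using this
        omega
      rw [hdiff, Set.ncard_diff hYB (Set.toFinite _)]
      omega
  -- Hall's theorem setup
  set ι := {p : V × ℕ // p.1 ∈ A ∧ p.2 < f p.1} with hι
  set t : ι → Finset V := fun p => Finset.univ.filter (fun v => v ∈ B ∧ G.Adj p.1.1 v)
    with ht
  have hall : ∀ s : Finset ι, s.card ≤ (s.biUnion t).card := by
    intro s
    set Xf : Finset V := s.image (fun p => p.1.1) with hXf
    have hXA : ↑Xf ⊆ A := by
      intro u hu
      simp only [hXf, Finset.coe_image, Set.mem_image, Finset.mem_coe] at hu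
      obtain ⟨p, _, rfl⟩ := hu
      exact p.2.1
    -- s.card ≤ ∑ u in Xf, f u
    have hcard1 : s.card ≤ ∑ u ∈ Xf, f u := by
      have himg : s.card = (s.image (fun p : ι => p.1)).card :=
        (Finset.card_image_of_injective s Subtype.val_injective).symm
      have hsub : s.image (fun p : ι => p.1) ⊆
          Xf.biUnion (fun u => {u} ×ˢ Finset.range (f u)) := by
        intro q hq
        obtain ⟨p, hp, rfl⟩ := Finset.mem_image.mp hq
        refine Finset.mem_biUnion.mpr ⟨p.1.1, ?_, ?_⟩
        · exact Finset.mem_image.mpr ⟨p, hp, rfl⟩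
        · rw [Finset.mem_product]
          exact ⟨Finset.mem_singleton_self _, Finset.mem_range.mpr p.2.2⟩
      have hbcard : (Xf.biUnion (fun u => {u} ×ˢ Finset.range (f u))).card
          = ∑ u ∈ Xf, f u := by
        rw [Finset.card_biUnion]
        · simp
        · intro x hx y hy hxy
          simp only [Finset.disjoint_left]
          intro q hq hq'
          rw [Finset.mem_product, Finset.mem_singleton] at hq hq'
          exact hxy (hq.1.symm.trans hq'.1)
      calc s.card = _ := himg
        _ ≤ _ := Finset.card_le_card hsub
        _ = ∑ u ∈ Xf, f u := hbcard
    -- biUnion identification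
    have hbU : s.biUnion t =
        Xf.biUnion (fun u => Finset.univ.filter (fun v => v ∈ B ∧ G.Adj u v)) := by
      rw [hXf, Finset.image_biUnion]
    have hbUset : (↑(s.biUnion t) : Set V) = extN G ↑Xf ∩ B := by
      rw [hbU]
      ext v
      simp only [Finset.coe_biUnion, Set.mem_iUnion, Finset.mem_coe,
        Finset.mem_filter, Finset.mem_univ, true_and, Set.mem_inter_iff, mem_extN]
      constructor
      · rintro ⟨u, hu, hvB, hadj⟩
        exact ⟨⟨⟨u, hu, hadj⟩, fun hvX =>
          Set.disjoint_left.mp hAB (hXA hvX) hvB⟩, hvB⟩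
      · rintro ⟨⟨⟨u, hu, hadj⟩, -⟩, hvB⟩
        exact ⟨u, hu, hvB, hadj⟩
    have hkey := key Xf hXA
    rw [← hbUset, Set.ncard_coe_finset] at hkey
    exact hcard1.trans hkey
  obtain ⟨g, hginj, hgt⟩ := (Finset.all_card_le_biUnion_card_iff_exists_injective t).mp hall
  have hgB : ∀ p : ι, g p ∈ B ∧ G.Adj p.1.1 (g p) := by
    intro p
    have := hgt p
    rw [ht] at this
    simpa using this
  -- construct the stars
  refine ⟨fun u => if h : u ∈ A then
    Set.range (fun i : Fin (f u) => g ⟨(u, i.1), ⟨h, i.2⟩⟩) else ∅, ?_, ?_⟩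
  · intro u hu
    simp only [dif_pos hu]
    have hinj : Function.Injective (fun i : Fin (f u) => g ⟨(u, i.1), ⟨hu, i.2⟩⟩) := by
      intro i j hij
      have := hginj hij
      have h2 : (u, i.1) = (u, j.1) := congrArg Subtype.val this
      exact Fin.ext (congrArg Prod.snd h2)
    refine ⟨?_, ?_, ?_⟩
    · rintro v ⟨i, rfl⟩
      exact (hgB _).1
    · rw [← Set.image_univ, Set.ncard_image_of_injective _ hinj, Set.ncard_univ,
        Nat.card_eq_fintype_card, Fintype.card_fin]
    · rintro x ⟨i, rfl⟩
      exact (hgB ⟨(u, i.1), ⟨hu, i.2⟩⟩).2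
  · intro u hu u' hu' hne
    simp only [dif_pos hu, dif_pos hu']
    rw [Set.disjoint_left]
    rintro x hx hx'
    rcases Set.mem_insert_iff.mp hx with rfl | ⟨i, rfl⟩
    · rcases Set.mem_insert_iff.mp hx' with h | ⟨j, hj⟩
      · exact hne h
      · exact Set.disjoint_left.mp hAB hu (hj ▸ (hgB _).1)
    · rcases Set.mem_insert_iff.mp hx' with h | ⟨j, hj⟩
      · exact Set.disjoint_left.mp hAB (h ▸ hu') (hgB _).1
      · have := hginj hj
        have h2 : (u', j.1) = (u, i.1) := congrArg Subtype.val this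
        exact hne (congrArg Prod.fst h2).symm
end
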